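/- Let L : ℝ[x₁,…,x_d] → ℝ be linear and nonnegative on squares, and suppose L(qf) = ∫_K f dν for a finite positive measure ν on compact K. Then ∫_{𝒱(q) ∩ K} f dν = 0 for every polynomial f; in particular ν restricted to 𝒱(q) ∩ K is the zero measure. -/

import Mathlib

/-!
Since `L` is nonnegative on squares, Cauchy–Schwarz gives `L(q g)² ≤ L(1) L(q² g²)`, that is
`(∫_K g dν)² ≤ L(1) ∫_K q g² dν` for every polynomial `g`. Take `g = (1 - c q²)ⁿ` with `c > 0` so
small that `c q² ≤ 1` on `K`. By dominated convergence the left side tends to `ν(𝒱(q) ∩ K)²`,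
while `q g²` tends to `0` pointwise, so the right side tends to `0`.
-/

open MeasureTheory MvPolynomial Filter Topology

theorem LinearMap.map_mul_sq_le_of_map_sq_nonneg {A : Type*} [CommRing A] [Algebra ℝ A]
    (L : A →ₗ[ℝ] ℝ) (hL : ∀ a, 0 ≤ L (a ^ 2)) (a b : A) :
    L (a * b) ^ 2 ≤ L (a ^ 2) * L (b ^ 2) := by
  simpa [sq, mul_comm b a] using LinearMap.BilinForm.apply_mul_apply_le_of_forall_zero_le
    ((LinearMap.mul ℝ A).compr₂ L) (fun x => by simpa [sq] using hL x) a b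

section OneSubMulSqPow

variable {c : ℝ}

theorem abs_one_sub_mul_sq_pow_le_one {y : ℝ} (hc : 0 ≤ c) (hy : c * y ^ 2 ≤ 1) (n : ℕ) :
    |(1 - c * y ^ 2) ^ n| ≤ 1 := by
  rw [abs_pow]
  have : 0 ≤ c * y ^ 2 := by positivity
  exact pow_le_one₀ (abs_nonneg _) (abs_le.mpr ⟨by linarith, by linarith⟩)

theorem tendsto_one_sub_mul_sq_pow {y : ℝ} (hc : 0 < c) (hy : c * y ^ 2 ≤ 1) :
    Tendsto (fun n : ℕ => (1 - c * y ^ 2) ^ n) atTop (𝓝 (if y = 0 then 1 else 0)) := by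
  split_ifs with hy0
  · simp [hy0]
  · have := sq_pos_of_ne_zero hy0
    exact tendsto_pow_atTop_nhds_zero_of_lt_one (by linarith) (by nlinarith)

variable {X : Type*} [MeasurableSpace X] {μ : Measure X} [IsFiniteMeasure μ] {φ : X → ℝ}

theorem tendsto_integral_one_sub_mul_sq_pow (hφ : Measurable φ) (hc : 0 < c)
    (hφc : ∀ᵐ x ∂μ, c * φ x ^ 2 ≤ 1) :
    Tendsto (fun n : ℕ => ∫ x, (1 - c * φ x ^ 2) ^ n ∂μ) atTop (𝓝 (μ.real {x | φ x = 0})) := by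
  rw [← integral_indicator_one (measurableSet_eq_fun hφ measurable_const)]
  refine tendsto_integral_of_dominated_convergence (fun _ => 1)
    (fun n => by fun_prop) (integrable_const 1) (fun n => ?_) ?_
  · filter_upwards [hφc] with x hx using abs_one_sub_mul_sq_pow_le_one hc.le hx n
  · filter_upwards [hφc] with x hx
    simpa [Set.indicator_apply] using tendsto_one_sub_mul_sq_pow hc hx

theorem tendsto_integral_mul_one_sub_mul_sq_pow_sq (hφ : Measurable φ) (hc : 0 < c)
    (hφc : ∀ᵐ x ∂μ, c * φ x ^ 2 ≤ 1) :
    Tendsto (fun n : ℕ => ∫ x, φ x * ((1 - c * φ x ^ 2) ^ n) ^ 2 ∂μ) atTop (𝓝 0) := by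
  rw [← integral_zero X ℝ]
  refine tendsto_integral_of_dominated_convergence (fun _ => √c⁻¹)
    (fun n => by fun_prop) (integrable_const _) (fun n => ?_) ?_
  · filter_upwards [hφc] with x hx
    have hφx : |φ x| ≤ √c⁻¹ := Real.abs_le_sqrt (by simpa using (le_inv_mul_iff₀ hc).mpr hx)
    have hpow : |(1 - c * φ x ^ 2) ^ n| ^ 2 ≤ 1 :=
      pow_le_one₀ (abs_nonneg _) (abs_one_sub_mul_sq_pow_le_one hc.le hx n)
    rw [Real.norm_eq_abs, abs_mul, abs_pow]
    nlinarith [abs_nonneg (φ x), sq_nonneg |(1 - c * φ x ^ 2) ^ n|]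
  · filter_upwards [hφc] with x hx
    have := ((tendsto_one_sub_mul_sq_pow hc hx).pow 2).const_mul (φ x)
    split_ifs at this with hx0 <;> simp_all

end OneSubMulSqPow

theorem sq_integral_le_of_map_mul_eq_integral {σ : Type*} [MeasurableSpace (σ → ℝ)]
    (L : MvPolynomial σ ℝ →ₗ[ℝ] ℝ) (hL : ∀ p, 0 ≤ L (p ^ 2)) (q : MvPolynomial σ ℝ)
    (μ : Measure (σ → ℝ)) (hrep : ∀ f, L (q * f) = ∫ x, eval x f ∂μ) (g : MvPolynomial σ ℝ) :
    (∫ x, eval x g ∂μ) ^ 2 ≤ L 1 * ∫ x, eval x q * eval x g ^ 2 ∂μ := by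
  calc (∫ x, eval x g ∂μ) ^ 2 = L (1 * (q * g)) ^ 2 := by rw [one_mul, hrep]
    _ ≤ L (1 ^ 2) * L ((q * g) ^ 2) := L.map_mul_sq_le_of_map_sq_nonneg hL 1 (q * g)
    _ = L 1 * ∫ x, eval x q * eval x g ^ 2 ∂μ := by
      rw [one_pow, show (q * g) ^ 2 = q * (q * g ^ 2) by ring, hrep]
      simp

theorem nu_vanishes_on_zero_set (d : ℕ)
    (L : MvPolynomial (Fin d) ℝ →ₗ[ℝ] ℝ)
    (hL : ∀ p : MvPolynomial (Fin d) ℝ, 0 ≤ L (p ^ 2))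
    (q : MvPolynomial (Fin d) ℝ)
    (K : Set (Fin d → ℝ)) (hK : IsCompact K)
    (ν : Measure (Fin d → ℝ)) [IsFiniteMeasure ν]
    (hrep : ∀ f : MvPolynomial (Fin d) ℝ,
      L (q * f) = ∫ x in K, eval x f ∂ν) :
    (∀ f : MvPolynomial (Fin d) ℝ,
      (∫ x in {x | eval x q = 0} ∩ K, eval x f ∂ν) = 0) ∧
    ν.restrict ({x | eval x q = 0} ∩ K) = 0 := by
  have hq : Continuous fun x => eval x q := continuous_eval q
  obtain ⟨B, hB⟩ := hK.exists_bound_of_continuousOn (f := fun x => eval x q ^ 2) (by fun_prop)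
  set c := (|B| + 1)⁻¹
  have hc : 0 < c := by positivity
  have hcK : ∀ᵐ x ∂ν.restrict K, c * eval x q ^ 2 ≤ 1 := by
    refine ae_restrict_of_forall_mem hK.measurableSet fun x hx => ?_
    have : eval x q ^ 2 ≤ |B| := (le_abs_self _).trans ((hB x hx).trans (le_abs_self B))
    rw [inv_mul_le_one₀ (by positivity)]
    linarith
  have hcs (n : ℕ) : (∫ x in K, (1 - c * eval x q ^ 2) ^ n ∂ν) ^ 2 ≤
      L 1 * ∫ x in K, eval x q * ((1 - c * eval x q ^ 2) ^ n) ^ 2 ∂ν := by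
    have := sq_integral_le_of_map_mul_eq_integral L hL q _ hrep ((1 - C c * q ^ 2) ^ n)
    simp only [map_pow, map_sub, map_mul, map_one, eval_C] at this
    exact this
  have hsq : ν.real ({x | eval x q = 0} ∩ K) ^ 2 ≤ L 1 * 0 := by
    rw [← measureReal_restrict_apply (measurableSet_eq_fun hq.measurable measurable_const)]
    exact le_of_tendsto_of_tendsto'
      ((tendsto_integral_one_sub_mul_sq_pow hq.measurable hc hcK).pow 2)
      ((tendsto_integral_mul_one_sub_mul_sq_pow_sq hq.measurable hc hcK).const_mul _) hcs
  have hzero : ν.restrict ({x | eval x q = 0} ∩ K) = 0 := by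
    rw [Measure.restrict_eq_zero, ← measureReal_eq_zero_iff]
    nlinarith [sq_nonneg (ν.real ({x | eval x q = 0} ∩ K))]
  exact ⟨fun f => by rw [hzero, integral_zero_measure], hzero⟩
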